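/- arXiv:2602.06514 — 3 statements merged into one kernel-verified Lean document; each statement's English description precedes it below -/
import Mathlib

section
/- Let $p_1 \le p_2 \le \cdots \le p_n$ be natural numbers, $m \ge 1$, and suppose $x : [m] \times [n] \to \mathbb{N}$ satisfies $\sum_{i=1}^m \sum_{j=1}^n x_{i,j} = n$. If $\sum_{j=1}^n n^j \sum_{i=1}^m x_{i,j} \ge \sum_{j=1}^n n^j$ and there exists some $j$ with $\sum_{i=1}^m x_{i,j} \ne 1$, then there exist indices $j_1 < j_2$ in $[n]$ with $\sum_{i=1}^m x_{i,j_1} = 0$ and $\sum_{i=1}^m x_{i,j_2} > 1$. -/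
/-!
Write `y j = ∑ i, x i j`. Since the `y j` sum to `n` and are not all `1`, some `y j` vanishes; let
`k` be the largest such index. If the conclusion failed, every `y j` with `j > k` would be `1`, so
the remaining mass `k + 1` sits on indices `j < k`, where each unit has weight at most `n ^ k`.
The weighted sum over `j ≤ k` is then at most `n ^ k * (k + 1) ≤ n ^ (k + 1)`, strictly less than
`∑ j ≤ k, n ^ (j + 1)`, while the terms with `j > k` agree on both sides of the objective bound.
-/

open Finset

lemma sum_Iio_add_add_sum_Ioi {α M : Type*} [LinearOrder α] [Fintype α]
    [LocallyFiniteOrderBot α] [LocallyFiniteOrderTop α] [AddCommMonoid M]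
    (f : α → M) (k : α) :
    ∑ j ∈ Iio k, f j + f k + ∑ j ∈ Ioi k, f j = ∑ j, f j := by
  rw [add_comm (∑ j ∈ Iio k, f j), ← sum_insert notMem_Iio_self, Iio_insert,
    ← sum_filter_add_sum_filter_not univ (· ≤ k)]
  congr 1 <;> · congr 1; ext j; simp

lemma exists_eq_zero_of_sum_eq_card {ι : Type*} [Fintype ι] (f : ι → ℕ)
    (hsum : ∑ j, f j = Fintype.card ι) (hne : ∃ j, f j ≠ 1) : ∃ j, f j = 0 := by
  by_contra! hpos
  obtain ⟨j, hj⟩ := hne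
  have : ∑ _j : ι, 1 < ∑ j, f j :=
    sum_lt_sum (fun i _ => Nat.one_le_iff_ne_zero.2 (hpos i))
      ⟨j, mem_univ j, lt_of_le_of_ne (Nat.one_le_iff_ne_zero.2 (hpos j)) (Ne.symm hj)⟩
  simp [hsum] at this

lemma sum_Iio_pow_mul_le {n : ℕ} (b : ℕ) (hb : 0 < b) (y : Fin n → ℕ) (k : Fin n) :
    ∑ j ∈ Iio k, b ^ ((j : ℕ) + 1) * y j ≤ b ^ (k : ℕ) * ∑ j ∈ Iio k, y j := by
  rw [mul_sum]
  exact sum_le_sum fun j hj =>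
    Nat.mul_le_mul_right _ (Nat.pow_le_pow_right hb (Fin.lt_def.1 (mem_Iio.1 hj)))

lemma sum_pow_mul_lt_sum_pow {n : ℕ} (y : Fin n → ℕ) (k : Fin n) (hsum : ∑ j, y j = n)
    (hk : y k = 0) (htail : ∀ j, k < j → y j = 1) :
    ∑ j : Fin n, n ^ ((j : ℕ) + 1) * y j < ∑ j : Fin n, n ^ ((j : ℕ) + 1) := by
  have hn : 0 < n := k.pos
  have hhead : ∑ j ∈ Iio k, y j = (k : ℕ) + 1 := by
    have := sum_Iio_add_add_sum_Ioi y k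
    rw [sum_congr rfl fun j hj => htail j (mem_Ioi.1 hj), hsum, hk] at this
    simp only [sum_const, Fin.card_Ioi, smul_eq_mul, mul_one] at this
    omega
  have hne : (Iio k).Nonempty := nonempty_of_sum_ne_zero (f := y) (by omega)
  have htail_sum :
      ∑ j ∈ Ioi k, n ^ ((j : ℕ) + 1) * y j = ∑ j ∈ Ioi k, n ^ ((j : ℕ) + 1) :=
    sum_congr rfl fun j hj => by rw [htail j (mem_Ioi.1 hj), mul_one]
  rw [← sum_Iio_add_add_sum_Ioi, ← sum_Iio_add_add_sum_Ioi, hk, mul_zero, add_zero, htail_sum]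
  refine Nat.add_lt_add_right ?_ _
  calc ∑ j ∈ Iio k, n ^ ((j : ℕ) + 1) * y j
      ≤ n ^ (k : ℕ) * ((k : ℕ) + 1) := hhead ▸ sum_Iio_pow_mul_le n hn y k
    _ ≤ n ^ (k : ℕ) * n := Nat.mul_le_mul_left _ k.isLt
    _ = n ^ ((k : ℕ) + 1) := (pow_succ _ _).symm
    _ < ∑ j ∈ Iio k, n ^ ((j : ℕ) + 1) + n ^ ((k : ℕ) + 1) :=
      Nat.lt_add_of_pos_left (sum_pos (fun _ _ => pow_pos hn _) hne)

theorem stmt_0_general (n m : ℕ)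
    (x : Fin m → Fin n → ℕ)
    (hsum : ∑ i, ∑ j, x i j = n)
    (hobj : ∑ j : Fin n, n ^ ((j : ℕ) + 1) * ∑ i, x i j ≥ ∑ j : Fin n, n ^ ((j : ℕ) + 1))
    (hbad : ∃ j : Fin n, ∑ i, x i j ≠ 1) :
    ∃ j₁ j₂ : Fin n, j₁ < j₂ ∧ (∑ i, x i j₁) = 0 ∧ 1 < ∑ i, x i j₂ := by
  set y : Fin n → ℕ := fun j => ∑ i, x i j
  have hy : ∑ j, y j = n := sum_comm.trans hsum
  obtain ⟨j₀, hj₀⟩ := exists_eq_zero_of_sum_eq_card y (by rw [hy, Fintype.card_fin]) hbad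
  obtain ⟨k, hk, hmax⟩ :=
    (univ.filter (y · = 0)).exists_max_image id ⟨j₀, by simpa using hj₀⟩
  rw [mem_filter] at hk
  by_contra! hcon
  refine absurd hobj (not_le.2 (sum_pow_mul_lt_sum_pow y k hy hk.2 fun j hkj => ?_))
  have hj : y j ≠ 0 := fun h => (hmax j (by simpa using h)).not_gt hkj
  have hj' : y j ≤ 1 := hcon k j hkj hk.2
  omega

theorem stmt_0 (n m : ℕ) (hm : 1 ≤ m) (p : Fin n → ℕ) (hp : Monotone p)
    (x : Fin m → Fin n → ℕ)
    (hsum : ∑ i, ∑ j, x i j = n)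
    (hobj : ∑ j : Fin n, n ^ ((j : ℕ) + 1) * ∑ i, x i j ≥ ∑ j : Fin n, n ^ ((j : ℕ) + 1))
    (hbad : ∃ j : Fin n, ∑ i, x i j ≠ 1) :
    ∃ j₁ j₂ : Fin n, j₁ < j₂ ∧ (∑ i, x i j₁) = 0 ∧ 1 < ∑ i, x i j₂ :=
  stmt_0_general n m x hsum hobj hbad
end

section
/- Let $n \ge 2$ be a natural number and let $y : [n] \to \mathbb{N}$ satisfy $\sum_{j=1}^n y_j = n$. Suppose $j_1$ is the largest index with $y_{j_1}=0$ and $j_2$ is the largest index with $y_{j_2}>1$, and $j_1 > j_2$. Then $\sum_{j=1}^n n^j y_j < \sum_{j=1}^n n^j$. -/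
theorem stmt_1 (n : ℕ) (hn : 2 ≤ n) (y : Fin n → ℕ)
    (hsum : ∑ j, y j = n)
    (j₁ j₂ : Fin n)
    (hj₁ : y j₁ = 0) (hj₁max : ∀ j : Fin n, y j = 0 → j ≤ j₁)
    (hj₂ : 1 < y j₂) (hj₂max : ∀ j : Fin n, 1 < y j → j ≤ j₂)
    (hlt : j₂ < j₁) :
    ∑ j : Fin n, n ^ ((j : ℕ) + 1) * y j < ∑ j : Fin n, n ^ ((j : ℕ) + 1) := by
  classical
  have hn1 : 1 ≤ n := by omega
  have key1 : ∀ j : Fin n, j₁ < j → y j = 1 := by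
    intro j hj
    rcases Nat.lt_or_ge (y j) 1 with h1 | h1
    · have h0 : y j = 0 := by omega
      exact absurd (hj₁max j h0) (not_le.mpr hj)
    · rcases Nat.lt_or_ge 1 (y j) with h2 | h2
      · exact absurd (hj₂max j h2) (not_le.mpr (hlt.trans hj))
      · omega
  rw [← Finset.sum_filter_add_sum_filter_not Finset.univ (fun j => j₁ < j)
        (fun j => n ^ ((j : ℕ) + 1) * y j),
      ← Finset.sum_filter_add_sum_filter_not Finset.univ (fun j => j₁ < j)
        (fun j => n ^ ((j : ℕ) + 1))]
  have heq : ∑ j ∈ Finset.univ.filter (fun j => j₁ < j), n ^ ((j : ℕ) + 1) * y j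
      = ∑ j ∈ Finset.univ.filter (fun j => j₁ < j), n ^ ((j : ℕ) + 1) := by
    refine Finset.sum_congr rfl ?_
    intro j hj
    rw [key1 j (Finset.mem_filter.mp hj).2, mul_one]
  rw [heq]
  apply add_lt_add_right
  set S2 := Finset.univ.filter (fun j : Fin n => ¬ j₁ < j) with hS2
  have hL : ∑ j ∈ S2, n ^ ((j : ℕ) + 1) * y j ≤ n ^ ((j₁ : ℕ) + 1) := by
    calc ∑ j ∈ S2, n ^ ((j : ℕ) + 1) * y j
        ≤ ∑ j ∈ S2, n ^ (j₁ : ℕ) * y j := by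
          refine Finset.sum_le_sum ?_
          intro j hj
          rcases Nat.eq_zero_or_pos (y j) with h0 | h0
          · simp [h0]
          · have hle : j ≤ j₁ := not_lt.mp (Finset.mem_filter.mp hj).2
            have hne : j ≠ j₁ := by
              rintro rfl; omega
            have hjlt : j < j₁ := lt_of_le_of_ne hle hne
            have hjlt' : (j : ℕ) < (j₁ : ℕ) := hjlt
            exact Nat.mul_le_mul_right _ (Nat.pow_le_pow_right hn1 (by omega))
      _ = n ^ (j₁ : ℕ) * ∑ j ∈ S2, y j := (Finset.mul_sum _ _ _).symm
      _ ≤ n ^ (j₁ : ℕ) * n := by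
          refine Nat.mul_le_mul_left _ ?_
          calc ∑ j ∈ S2, y j ≤ ∑ j, y j :=
                Finset.sum_le_sum_of_subset (Finset.filter_subset _ _)
            _ = n := hsum
      _ = n ^ ((j₁ : ℕ) + 1) := by ring
  have hR : n ^ ((j₁ : ℕ) + 1) < ∑ j ∈ S2, n ^ ((j : ℕ) + 1) := by
    have hsub : ({j₂, j₁} : Finset (Fin n)) ⊆ S2 := by
      intro j hj
      simp only [Finset.mem_insert, Finset.mem_singleton] at hj
      simp only [hS2, Finset.mem_filter, Finset.mem_univ, true_and, not_lt]
      rcases hj with rfl | rfl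
      · exact hlt.le
      · exact le_refl _
    have hle := Finset.sum_le_sum_of_subset (f := fun j : Fin n => n ^ ((j : ℕ) + 1)) hsub
    rw [Finset.sum_pair (ne_of_lt hlt)] at hle
    have hpos : 0 < n ^ ((j₂ : ℕ) + 1) := Nat.pow_pos (by omega)
    linarith
  exact lt_of_le_of_lt hL hR
end

section
/- Let $n \ge 1$, let $K \ge 1$, partition $[n]$ into nonempty classes $J^{(1)},\ldots,J^{(K)}$ with $n_k = |J^{(k)}|$, let $p_1 \le \cdots \le p_n$ be natural numbers, and let $m \ge 1$ with capacities $c_{i,k} \in \mathbb{N}$. Suppose $x : [m] \times [n] \to \mathbb{N}$ satisfies for each $k$: $\sum_{i=1}^m \sum_{j \in J^{(k)}} x_{i,j} = n_k$, and additionally $\sum_{j=1}^n n^j \sum_{i=1}^m x_{i,j} \ge \sum_{j=1}^n n^j$. If there is some $j$ with $\sum_i x_{i,j} \ne 1$, then there exist $k$ and indices $j_1 < j_2$ both in $J^{(k)}$ with $\sum_i x_{i,j_1} = 0$ and $\sum_i x_{i,j_2} > 1$. -/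
/-!
Write `s j = ∑ i, x i j`. Summing the class constraints gives `∑ j, s j = n`. Let `J` be the
largest index with `s J ≠ 1`. If `s J = 0`, then `s ≡ 1` above `J` and the indices `j < J` carry
total mass `J + 1 ≤ n`, so with the base-`n` weights `n ^ (j + 1)` they contribute at most
`n ^ (J + 1)` — too little to make up for the missing weight of `J`, against the objective
inequality. Hence `s J ≥ 2`, and since the class of `J` has total mass equal to its size, some
index of that class has `s = 0`; by maximality of `J` it lies below `J`.
-/

open Finset

section Mass

variable {ι : Type*} {s : ι → ℕ}

lemma exists_eq_zero_of_sum_eq_card_s5 {T : Finset ι} (h : ∑ j ∈ T, s j = #T) {J : ι} (hJ : J ∈ T)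
    (hsJ : 1 < s J) : ∃ j ∈ T, s j = 0 := by
  by_contra! hpos
  have : ∑ _j ∈ T, 1 < ∑ j ∈ T, s j :=
    sum_lt_sum (fun j hj => Nat.one_le_iff_ne_zero.2 (hpos j hj)) ⟨J, hJ, hsJ⟩
  simp [h] at this

variable [Fintype ι]

lemma sum_eq_card_of_sum_fiber_eq_card {κ : Type*} [Fintype κ] [DecidableEq κ] (f : ι → κ)
    (h : ∀ k, ∑ j ∈ univ.filter (fun j => f j = k), s j = #(univ.filter fun j => f j = k)) :
    ∑ j, s j = Fintype.card ι := by
  rw [← sum_fiberwise univ f s, ← card_univ,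
    card_eq_sum_card_fiberwise (f := f) (t := univ) (fun _ _ => mem_coe.2 (mem_univ _))]
  exact sum_congr rfl fun k _ => h k

variable [DecidableEq ι] (T : Finset ι) (hT : ∀ j ∉ T, s j = 1)
include hT

lemma sum_eq_card_of_eq_one_off (h : ∑ j, s j = Fintype.card ι) : ∑ j ∈ T, s j = #T := by
  have hoff : ∑ j ∈ Tᶜ, s j = #Tᶜ := by
    rw [card_eq_sum_ones]
    exact sum_congr rfl fun j hj => hT j (mem_compl.1 hj)
  have hcard := card_add_card_compl T
  rw [← sum_add_sum_compl T, hoff] at h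
  omega

lemma sum_le_sum_mul_of_eq_one_off {w : ι → ℕ} (h : ∑ j, w j ≤ ∑ j, w j * s j) :
    ∑ j ∈ T, w j ≤ ∑ j ∈ T, w j * s j := by
  have hoff : ∑ j ∈ Tᶜ, w j * s j = ∑ j ∈ Tᶜ, w j :=
    sum_congr rfl fun j hj => by rw [hT j (mem_compl.1 hj), mul_one]
  rw [← sum_add_sum_compl T, ← sum_add_sum_compl T (fun j => w j * s j), hoff] at h
  exact Nat.le_of_add_le_add_right h

end Mass

section Weights

variable {n : ℕ}

lemma sum_Iio_pow_mul_lt (s : Fin n → ℕ) (J : Fin n) (hs : ∑ j ∈ Iio J, s j ≤ n) :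
    ∑ j ∈ Iio J, n ^ ((j : ℕ) + 1) * s j < n ^ ((J : ℕ) + 1) + ∑ j ∈ Iio J, n ^ ((j : ℕ) + 1) := by
  have hn : 0 < n := J.pos
  rcases (Iio J).eq_empty_or_nonempty with hempty | ⟨j₀, hj₀⟩
  · simp [hempty, hn]
  have hlow : ∑ j ∈ Iio J, n ^ ((j : ℕ) + 1) * s j ≤ n ^ ((J : ℕ) + 1) :=
    calc ∑ j ∈ Iio J, n ^ ((j : ℕ) + 1) * s j
        ≤ ∑ j ∈ Iio J, n ^ (J : ℕ) * s j := by
          gcongr with j hj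
          exact mem_Iio.1 hj
      _ = n ^ (J : ℕ) * ∑ j ∈ Iio J, s j := (mul_sum ..).symm
      _ ≤ n ^ (J : ℕ) * n := Nat.mul_le_mul_left _ hs
      _ = n ^ ((J : ℕ) + 1) := (pow_succ ..).symm
  have hpos : 0 < ∑ j ∈ Iio J, n ^ ((j : ℕ) + 1) :=
    sum_pos' (fun _ _ => Nat.zero_le _) ⟨j₀, hj₀, pow_pos hn _⟩
  omega

lemma one_lt_of_ne_one_of_forall_gt_eq_one {s : Fin n → ℕ} (htot : ∑ j, s j = n)
    (hw : ∑ j : Fin n, n ^ ((j : ℕ) + 1) ≤ ∑ j : Fin n, n ^ ((j : ℕ) + 1) * s j) {J : Fin n}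
    (hJ : s J ≠ 1) (hgt : ∀ j, J < j → s j = 1) : 1 < s J := by
  by_contra! hle
  have hJ0 : s J = 0 := by omega
  have hoff : ∀ j ∉ Iic J, s j = 1 := fun j hj => hgt j (not_le.1 (mem_Iic.not.1 hj))
  have hmass := sum_eq_card_of_eq_one_off (Iic J) hoff (by simpa using htot)
  have hweight := sum_le_sum_mul_of_eq_one_off (Iic J) hoff hw
  rw [← Iio_insert, sum_insert notMem_Iio_self, hJ0, zero_add, Iio_insert, Fin.card_Iic] at hmass
  rw [← Iio_insert, sum_insert notMem_Iio_self, sum_insert notMem_Iio_self, hJ0, mul_zero,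
    zero_add] at hweight
  exact absurd hweight (not_le.2 (sum_Iio_pow_mul_lt s J (hmass ▸ J.isLt)))

end Weights

theorem stmt_5_general (n m K : ℕ)
    (cls : Fin n → Fin K)
    (x : Fin m → Fin n → ℕ)
    (h1 : ∀ k : Fin K,
      ∑ i, ∑ j ∈ Finset.univ.filter (fun j => cls j = k), x i j
        = (Finset.univ.filter (fun j => cls j = k)).card)
    (h2 : ∑ j : Fin n, n ^ ((j : ℕ) + 1) * ∑ i, x i j ≥ ∑ j : Fin n, n ^ ((j : ℕ) + 1))
    (hbad : ∃ j : Fin n, ∑ i, x i j ≠ 1) :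
    ∃ j₁ j₂ : Fin n, j₁ < j₂ ∧ cls j₁ = cls j₂ ∧
      (∑ i, x i j₁) = 0 ∧ 1 < ∑ i, x i j₂ := by
  set s : Fin n → ℕ := fun j => ∑ i, x i j
  have hclass : ∀ k, ∑ j ∈ univ.filter (fun j => cls j = k), s j
      = #(univ.filter fun j => cls j = k) := fun k => by rw [← h1 k, sum_comm]
  have htot : ∑ j, s j = n := by simpa using sum_eq_card_of_sum_fiber_eq_card cls hclass
  obtain ⟨J, hJ, hmax⟩ := exists_max_image (univ.filter fun j => s j ≠ 1) id
    (by simpa [Finset.Nonempty] using hbad)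
  have hJ : s J ≠ 1 := (mem_filter.1 hJ).2
  have hJ2 : 1 < s J := one_lt_of_ne_one_of_forall_gt_eq_one htot h2 hJ fun j hj => by
    by_contra hj1
    exact absurd (hmax j (by simpa using hj1)) (not_le.2 hj)
  obtain ⟨j₁, hj₁, hj₁0⟩ := exists_eq_zero_of_sum_eq_card_s5 (hclass (cls J)) (by simp) hJ2
  have hj₁J : j₁ ≤ J := hmax j₁ (by simp [hj₁0])
  exact ⟨j₁, J, hj₁J.lt_of_ne (by rintro rfl; omega), (mem_filter.1 hj₁).2, hj₁0, hJ2⟩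

theorem stmt_5 (n m K : ℕ) (hn : 1 ≤ n) (hm : 1 ≤ m) (hK : 1 ≤ K)
    (cls : Fin n → Fin K) (hcls : ∀ k : Fin K, ∃ j : Fin n, cls j = k)
    (p : Fin n → ℕ) (hp : Monotone p)
    (x : Fin m → Fin n → ℕ)
    (h1 : ∀ k : Fin K,
      ∑ i, ∑ j ∈ Finset.univ.filter (fun j => cls j = k), x i j
        = (Finset.univ.filter (fun j => cls j = k)).card)
    (h2 : ∑ j : Fin n, n ^ ((j : ℕ) + 1) * ∑ i, x i j ≥ ∑ j : Fin n, n ^ ((j : ℕ) + 1))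
    (hbad : ∃ j : Fin n, ∑ i, x i j ≠ 1) :
    ∃ j₁ j₂ : Fin n, j₁ < j₂ ∧ cls j₁ = cls j₂ ∧
      (∑ i, x i j₁) = 0 ∧ 1 < ∑ i, x i j₂ :=
  stmt_5_general n m K cls x h1 h2 hbad
end
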